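/- arXiv:2605.18866 — 2 statements merged into one kernel-verified Lean document; each statement's English description precedes it below -/
import Mathlib

section
/- Let Ω ⊂ ℝ^d be a bounded open set with positive Lebesgue measure. Then the set of finite linear combinations of isotropic Gaussian primitives, i.e. functions of the form x ↦ Σ_{k=1}^K c_k exp(−‖x−μ_k‖²/(2σ_k²)) with K ∈ ℕ, c_k ∈ ℝ, μ_k ∈ ℝ^d and σ_k > 0, restricted to Ω, is dense in L²(Ω) with respect to Lebesgue measure. -/
/-!
A product of two Gaussian primitives is a multiple of a third one (complete the square), so
their linear span is a non-unital algebra; it separates points. By Stone–Weierstrass its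
unitization is uniformly dense on compact sets, and the constant term can be traded for a very
wide Gaussian, which is uniformly close to `1` on a bounded set. Hence the span is uniformly
dense on the compact set `closure Ω`, which carries the finite measure `volume.restrict Ω`;
uniform approximation there gives `L²` approximation of every bounded continuous function,
and these are dense in `L²`.
-/

open MeasureTheory Filter Topology
open scoped ENNReal Pointwise

theorem NonUnitalSubalgebra.exists_mem_near_continuous_of_isCompact_of_separatesPoints
    {X : Type*} [TopologicalSpace X] {A : NonUnitalSubalgebra ℝ C(X, ℝ)}
    (hsep : Set.SeparatesPoints ((⇑) '' (A : Set C(X, ℝ)))) {K : Set X} (hK : IsCompact K)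
    (hone : ∀ ε > 0, ∃ u ∈ A, ∀ x ∈ K, |u x - 1| < ε) (f : C(X, ℝ)) {ε : ℝ} (hε : 0 < ε) :
    ∃ g ∈ A, ∀ x ∈ K, |g x - f x| < ε := by
  have hsep' : (Algebra.adjoin ℝ (A : Set C(X, ℝ))).SeparatesPoints :=
    Set.separatesPoints_mono (Set.image_mono Algebra.subset_adjoin) hsep
  obtain ⟨b, hb, hbf⟩ :=
    ContinuousMap.exists_mem_subalgebra_near_continuous_of_isCompact_of_separatesPoints
      hsep' f hK (half_pos hε)
  -- `b = r + a` with `a ∈ A`; replace the constant `r` by `r • u` with `u ≈ 1` on `K`.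
  obtain ⟨⟨r, a, ha⟩, rfl⟩ := (NonUnitalSubalgebra.unitization_range A).ge hb
  obtain ⟨u, hu, hu1⟩ := hone (ε / 2 / (|r| + 1)) (by positivity)
  refine ⟨r • u + a, add_mem (SMulMemClass.smul_mem r hu) ha, fun x hx => ?_⟩
  have hbx := hbf x hx
  have hux := hu1 x hx
  simp only [AlgHom.toRingHom_eq_coe, RingHom.coe_coe, unitization_apply, ContinuousMap.add_apply,
    algebraMap_apply, smul_eq_mul, mul_one, Real.norm_eq_abs] at hbx
  simp only [ContinuousMap.add_apply, ContinuousMap.smul_apply, smul_eq_mul]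
  have hru : |r| * |u x - 1| ≤ ε / 2 := by
    rw [lt_div_iff₀ (by positivity)] at hux
    nlinarith [abs_nonneg r, abs_nonneg (u x - 1)]
  calc |r * u x + a x - f x| = |r * (u x - 1) + (r + a x - f x)| := by ring_nf
    _ ≤ |r| * |u x - 1| + |r + a x - f x| := by
      rw [← abs_mul]; exact abs_add_le _ _
    _ < ε := by linarith

theorem Submodule.mul_mem_span_of_mul_subset {R A : Type*} [CommSemiring R] [Semiring A]
    [Algebra R A] {s : Set A} (hs : s * s ⊆ (span R s : Set A)) {x y : A} (hx : x ∈ span R s)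
    (hy : y ∈ span R s) : x * y ∈ span R s := by
  have hxy := mul_mem_mul hx hy
  rw [span_mul_span] at hxy
  exact span_le.mpr hs hxy

theorem MeasureTheory.Lp.dense_setOf_ae_eq_of_forall_exists_near
    {X : Type*} [TopologicalSpace X] [NormalSpace X] [MeasurableSpace X] [BorelSpace X]
    {μ : Measure X} [IsFiniteMeasure μ] [μ.WeaklyRegular] {p : ℝ≥0∞} [Fact (1 ≤ p)]
    (hp : p ≠ ∞) {K : Set X} (hK : ∀ᵐ x ∂μ, x ∈ K) {S : Set C(X, ℝ)}
    (hS : ∀ f : C(X, ℝ), ∀ ε > 0, ∃ g ∈ S, ∀ x ∈ K, |g x - f x| < ε) :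
    Dense {F : Lp ℝ p μ | ∃ g ∈ S, F =ᵐ[μ] g} := by
  refine Dense.of_closure <| (BoundedContinuousFunction.toLp_denseRange ℝ μ ℝ hp).mono ?_
  rintro _ ⟨f, rfl⟩
  rw [Metric.mem_closure_iff]
  intro ε hε
  set C := (measureUnivNNReal μ : ℝ) ^ p.toReal⁻¹
  have hC : 0 ≤ C := by positivity
  obtain ⟨g, hgS, hgf⟩ := hS f.toContinuousMap (ε / (C + 1)) (by positivity)
  have hgf_ae : ∀ᵐ x ∂μ, ‖g x - f x‖ ≤ ε / (C + 1) := by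
    filter_upwards [hK] with x hx using (hgf x hx).le
  have hg_memLp : MemLp g p μ := by
    refine MemLp.of_bound g.continuous.aestronglyMeasurable (‖f‖ + ε / (C + 1)) ?_
    filter_upwards [hgf_ae] with x hx
    have := f.norm_coe_le_norm x
    calc ‖g x‖ ≤ ‖f x‖ + ‖g x - f x‖ := norm_le_insert' _ _
      _ ≤ _ := by linarith
  refine ⟨hg_memLp.toLp g, ⟨g, hgS, hg_memLp.coeFn_toLp⟩, ?_⟩
  rw [dist_eq_norm']
  have hdiff : ∀ᵐ x ∂μ, ‖(hg_memLp.toLp g - BoundedContinuousFunction.toLp p μ ℝ f) x‖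
      ≤ ε / (C + 1) := by
    filter_upwards [Lp.coeFn_sub (hg_memLp.toLp g) (BoundedContinuousFunction.toLp p μ ℝ f),
      hg_memLp.coeFn_toLp, BoundedContinuousFunction.coeFn_toLp p μ ℝ f, hgf_ae]
      with x hsub hg hf hx
    rw [hsub, Pi.sub_apply, hg, hf]
    exact hx
  calc _ ≤ C * (ε / (C + 1)) := Lp.norm_le_of_ae_bound (by positivity) hdiff
    _ < ε := by
      rw [mul_div_assoc', div_lt_iff₀ (by positivity)]
      nlinarith

section Gaussian

variable {E : Type*} [NormedAddCommGroup E]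

noncomputable def gaussianPrimitive (μ : E) (σ : ℝ) : C(E, ℝ) :=
  ⟨fun x => Real.exp (-‖x - μ‖ ^ 2 / (2 * σ ^ 2)), by fun_prop⟩

@[simp]
theorem gaussianPrimitive_apply (μ : E) (σ : ℝ) (x : E) :
    gaussianPrimitive μ σ x = Real.exp (-‖x - μ‖ ^ 2 / (2 * σ ^ 2)) :=
  rfl

variable (E) in
/-- The scales must be positive: since `x / 0 = 0`, `gaussianPrimitive μ 0` is the constant `1`. -/
def gaussianPrimitives : Set C(E, ℝ) :=
  {f | ∃ μ σ, 0 < σ ∧ gaussianPrimitive μ σ = f}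

theorem abs_gaussianPrimitive_sub_one_le (μ : E) (σ : ℝ) (x : E) :
    |gaussianPrimitive μ σ x - 1| ≤ ‖x - μ‖ ^ 2 / (2 * σ ^ 2) := by
  have ht : 0 ≤ ‖x - μ‖ ^ 2 / (2 * σ ^ 2) := by positivity
  rw [gaussianPrimitive_apply, neg_div, abs_sub_comm,
    abs_of_nonneg (sub_nonneg.mpr (Real.exp_le_one_iff.mpr (neg_nonpos.mpr ht)))]
  linarith [Real.add_one_le_exp (-(‖x - μ‖ ^ 2 / (2 * σ ^ 2)))]

theorem gaussianPrimitive_lt_one {μ x : E} (hx : x ≠ μ) {σ : ℝ} (hσ : σ ≠ 0) :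
    gaussianPrimitive μ σ x < 1 := by
  rw [gaussianPrimitive_apply, Real.exp_lt_one_iff, neg_div, neg_lt_zero]
  have : 0 < ‖x - μ‖ := norm_pos_iff.mpr (sub_ne_zero.mpr hx)
  positivity

variable [InnerProductSpace ℝ E]

/-- Completing the square in the exponent. -/
theorem gaussianPrimitive_mul_gaussianPrimitive (μ ν : E) {σ τ : ℝ} (hσ : σ ≠ 0) (hτ : τ ≠ 0) :
    gaussianPrimitive μ σ * gaussianPrimitive ν τ =
      Real.exp (-‖μ - ν‖ ^ 2 / (2 * (σ ^ 2 + τ ^ 2))) •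
        gaussianPrimitive ((τ ^ 2 / (σ ^ 2 + τ ^ 2)) • μ + (σ ^ 2 / (σ ^ 2 + τ ^ 2)) • ν)
          (σ * τ / √(σ ^ 2 + τ ^ 2)) := by
  have hst : 0 < σ ^ 2 + τ ^ 2 := by positivity
  ext x
  simp only [ContinuousMap.mul_apply, ContinuousMap.smul_apply, gaussianPrimitive_apply,
    smul_eq_mul, ← Real.exp_add]
  congr 1
  rw [div_pow, Real.sq_sqrt hst.le, norm_sub_sq_real x μ, norm_sub_sq_real x ν,
    norm_sub_sq_real μ ν, norm_sub_sq_real, norm_add_sq_real, inner_add_right,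
    norm_smul, norm_smul, real_inner_smul_left, real_inner_smul_right,
    real_inner_smul_right, real_inner_smul_right, mul_pow, mul_pow,
    Real.norm_eq_abs, Real.norm_eq_abs, sq_abs, sq_abs]
  field_simp
  ring

theorem gaussianPrimitives_mul_subset : gaussianPrimitives E * gaussianPrimitives E ⊆
    (Submodule.span ℝ (gaussianPrimitives E) : Set C(E, ℝ)) := by
  rintro _ ⟨_, ⟨μ, σ, hσ, rfl⟩, _, ⟨ν, τ, hτ, rfl⟩, rfl⟩
  simp only [gaussianPrimitive_mul_gaussianPrimitive μ ν hσ.ne' hτ.ne']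
  exact Submodule.smul_mem _ _ (Submodule.subset_span ⟨_, _, by positivity, rfl⟩)

variable (E) in
def gaussianSubalgebra : NonUnitalSubalgebra ℝ C(E, ℝ) :=
  (Submodule.span ℝ (gaussianPrimitives E)).toNonUnitalSubalgebra fun _ _ =>
    Submodule.mul_mem_span_of_mul_subset gaussianPrimitives_mul_subset

theorem gaussianPrimitive_mem_gaussianSubalgebra (μ : E) {σ : ℝ} (hσ : 0 < σ) :
    gaussianPrimitive μ σ ∈ gaussianSubalgebra E :=
  Submodule.subset_span ⟨μ, σ, hσ, rfl⟩

theorem exists_eq_sum_of_mem_gaussianSubalgebra {f : C(E, ℝ)} (hf : f ∈ gaussianSubalgebra E) :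
    ∃ (K : ℕ) (c : Fin K → ℝ) (μ : Fin K → E) (σ : Fin K → ℝ), (∀ k, 0 < σ k) ∧
      ⇑f = fun x => ∑ k, c k * Real.exp (-‖x - μ k‖ ^ 2 / (2 * σ k ^ 2)) := by
  obtain ⟨K, c, g, rfl⟩ := Submodule.mem_span_set'.mp hf
  choose μ σ hσ hg using fun k => (g k).2
  refine ⟨K, c, μ, σ, hσ, funext fun x => ?_⟩
  simp [← hg]

theorem gaussianSubalgebra_separatesPoints :
    Set.SeparatesPoints ((⇑) '' (gaussianSubalgebra E : Set C(E, ℝ))) := by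
  intro x y hxy
  refine ⟨_, ⟨gaussianPrimitive x 1, gaussianPrimitive_mem_gaussianSubalgebra x one_pos, rfl⟩, ?_⟩
  refine (gaussianPrimitive_lt_one hxy.symm one_ne_zero).ne' ∘ Eq.trans ?_
  simp

theorem exists_mem_gaussianSubalgebra_near_one {K : Set E} (hK : Bornology.IsBounded K) {ε : ℝ}
    (hε : 0 < ε) : ∃ u ∈ gaussianSubalgebra E, ∀ x ∈ K, |u x - 1| < ε := by
  obtain ⟨R, hR⟩ := hK.subset_closedBall 0
  have hwide : Tendsto (fun σ : ℝ => R ^ 2 / (2 * σ ^ 2)) atTop (𝓝 0) :=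
    tendsto_const_nhds.div_atTop ((tendsto_pow_atTop two_ne_zero).const_mul_atTop two_pos)
  obtain ⟨σ, hσε, hσ⟩ := ((hwide.eventually (gt_mem_nhds hε)).and (eventually_gt_atTop 0)).exists
  refine ⟨gaussianPrimitive 0 σ, gaussianPrimitive_mem_gaussianSubalgebra 0 hσ, fun x hx => ?_⟩
  have hxR : ‖x - 0‖ ≤ R := by simpa using hR hx
  calc |gaussianPrimitive 0 σ x - 1| ≤ ‖x - 0‖ ^ 2 / (2 * σ ^ 2) :=
        abs_gaussianPrimitive_sub_one_le 0 σ x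
    _ ≤ R ^ 2 / (2 * σ ^ 2) := by gcongr
    _ < ε := hσε

theorem exists_mem_gaussianSubalgebra_near_of_isCompact {K : Set E} (hK : IsCompact K)
    (f : C(E, ℝ)) {ε : ℝ} (hε : 0 < ε) :
    ∃ g ∈ gaussianSubalgebra E, ∀ x ∈ K, |g x - f x| < ε :=
  NonUnitalSubalgebra.exists_mem_near_continuous_of_isCompact_of_separatesPoints
    gaussianSubalgebra_separatesPoints hK
    (fun _ => exists_mem_gaussianSubalgebra_near_one hK.isBounded) f hε

end Gaussian

theorem gaussian_primitives_dense_L2_general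
    (d : ℕ) (Ω : Set (EuclideanSpace ℝ (Fin d)))
    (hΩbdd : Bornology.IsBounded Ω) :
    Dense {F : Lp ℝ 2 (volume.restrict Ω) |
      ∃ (K : ℕ) (c : Fin K → ℝ) (μ : Fin K → EuclideanSpace ℝ (Fin d))
        (σ : Fin K → ℝ), (∀ k, 0 < σ k) ∧
        ⇑F =ᵐ[volume.restrict Ω]
          fun x => ∑ k, c k * Real.exp (-‖x - μ k‖ ^ 2 / (2 * σ k ^ 2))} := by
  have hΩfin : volume Ω ≠ ⊤ := hΩbdd.measure_lt_top.ne
  have : IsFiniteMeasure (volume.restrict Ω) := isFiniteMeasure_restrict.mpr hΩfin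
  have : (volume.restrict Ω).WeaklyRegular := .restrict_of_measure_ne_top hΩfin
  have hΩ_closure : ∀ᵐ x ∂volume.restrict Ω, x ∈ closure Ω :=
    ae_restrict_of_ae_restrict_of_subset subset_closure
      (ae_restrict_mem isClosed_closure.measurableSet)
  have hdense := Lp.dense_setOf_ae_eq_of_forall_exists_near (p := 2) ENNReal.ofNat_ne_top
    hΩ_closure fun f _ hε =>
      exists_mem_gaussianSubalgebra_near_of_isCompact hΩbdd.isCompact_closure f hε
  refine hdense.mono ?_
  rintro F ⟨g, hg, hFg⟩
  obtain ⟨K, c, μ, σ, hσ, hg_eq⟩ := exists_eq_sum_of_mem_gaussianSubalgebra hg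
  exact ⟨K, c, μ, σ, hσ, hg_eq ▸ hFg⟩

/-- For a bounded open set `Ω ⊆ ℝ^d` of positive Lebesgue measure,
finite linear combinations of isotropic Gaussian primitives
`x ↦ ∑ₖ cₖ exp(−‖x−μₖ‖²/(2σₖ²))` are dense in `L²(Ω)`. -/
theorem gaussian_primitives_dense_L2
    (d : ℕ) (Ω : Set (EuclideanSpace ℝ (Fin d)))
    (hΩopen : IsOpen Ω) (hΩbdd : Bornology.IsBounded Ω)
    (hΩpos : 0 < volume Ω) :
    Dense {F : Lp ℝ 2 (volume.restrict Ω) |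
      ∃ (K : ℕ) (c : Fin K → ℝ) (μ : Fin K → EuclideanSpace ℝ (Fin d))
        (σ : Fin K → ℝ), (∀ k, 0 < σ k) ∧
        ⇑F =ᵐ[volume.restrict Ω]
          fun x => ∑ k, c k * Real.exp (-‖x - μ k‖ ^ 2 / (2 * σ k ^ 2))} :=
  gaussian_primitives_dense_L2_general d Ω hΩbdd
end

section
/- Let μ_1,…,μ_K ∈ ℝ^d be points whose pairwise distances satisfy ‖μ_i−μ_j‖ ≥ 2q for i ≠ j, where q ≥ h/ρ for some h > 0 and ρ ≥ 1, and fix C_Σ > 0 and m ≥ 0. Then there exists a constant C depending only on d, m, ρ, C_Σ such that for every x ∈ ℝ^d, Σ_{k=1}^K exp(−‖x−μ_k‖²/(2 C_Σ h²)) ‖x−μ_k‖^m ≤ C h^m. -/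
open MeasureTheory Metric Real GaussianFourier Finset
open scoped Nat

/-! Rescaling by `h` reduces to `h = 1` with separation `2 / ρ`. The moment factor is
absorbed by halving the Gaussian's exponent: `t ^ m * exp (-t² / 2c) ≤ C * exp (-t² / 4c)`.
On the ball `B(μₖ, r)` the Gaussian `exp (-(b/2) ‖x - y‖²)` is at least
`exp (-b r²) * exp (-b ‖x - μₖ‖²)`, and these balls are disjoint, so `∑ₖ exp (-b ‖x - μₖ‖²)`
is at most `exp (b r²)` times the full Gaussian integral divided by the volume of an `r`-ball,
whatever `K` and `x` are. -/

namespace Real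

theorem rpow_le_factorial_ceil_mul_exp {a t : ℝ} (ha : 0 ≤ a) (ht : 0 ≤ t) :
    t ^ a ≤ (⌈a⌉₊)! * exp t := by
  have hfact : (1 : ℝ) ≤ (⌈a⌉₊)! := Nat.one_le_cast.mpr (Nat.factorial_pos _)
  rcases le_total t 1 with ht1 | ht1
  · calc t ^ a ≤ 1 := rpow_le_one ht ht1 ha
      _ ≤ (⌈a⌉₊)! * exp t := one_le_mul_of_one_le_of_one_le hfact (one_le_exp ht)
  · calc t ^ a ≤ t ^ (⌈a⌉₊ : ℝ) := rpow_le_rpow_of_exponent_le ht1 (Nat.le_ceil a)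
      _ = t ^ ⌈a⌉₊ := rpow_natCast t _
      _ ≤ (⌈a⌉₊)! * exp t := by
        rw [← div_le_iff₀' (by positivity)]
        exact pow_div_factorial_le_exp t ht _

theorem exp_neg_sq_div_mul_rpow_le {c m t : ℝ} (hc : 0 < c) (hm : 0 ≤ m) (ht : 0 ≤ t) :
    exp (-t ^ 2 / (2 * c)) * t ^ m ≤
      (4 * c) ^ (m / 2) * (⌈m / 2⌉₊)! * exp (-t ^ 2 / (4 * c)) := by
  set s := t ^ 2 / (4 * c) with hs
  have hs0 : 0 ≤ s := by positivity
  have hpow : t ^ m = (4 * c) ^ (m / 2) * s ^ (m / 2) := by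
    rw [← mul_rpow (by positivity) hs0, hs, mul_div_cancel₀ _ (by positivity),
      ← rpow_natCast, ← rpow_mul ht]
    ring_nf
  calc exp (-t ^ 2 / (2 * c)) * t ^ m
      ≤ exp (-(2 * s)) * ((4 * c) ^ (m / 2) * ((⌈m / 2⌉₊)! * exp s)) := by
        rw [hpow, hs]
        gcongr
        · exact le_of_eq (by ring_nf)
        · exact rpow_le_factorial_ceil_mul_exp (by positivity) hs0
    _ = (4 * c) ^ (m / 2) * (⌈m / 2⌉₊)! * exp (-t ^ 2 / (4 * c)) := by
        rw [hs, show -t ^ 2 / (4 * c) = -(2 * (t ^ 2 / (4 * c))) + t ^ 2 / (4 * c) by ring,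
          exp_add]
        ring

end Real

theorem exp_neg_mul_sq_norm_sub_le_of_norm_sub_le {E : Type*} [SeminormedAddCommGroup E]
    {b r : ℝ} (hb : 0 ≤ b) {x y c : E} (hy : ‖y - c‖ ≤ r) :
    exp (-b * ‖x - c‖ ^ 2) ≤ exp (b * r ^ 2) * exp (-(b / 2) * ‖x - y‖ ^ 2) := by
  have htri : ‖x - y‖ ≤ ‖x - c‖ + r := by
    calc ‖x - y‖ ≤ ‖x - c‖ + ‖c - y‖ := norm_sub_le_norm_sub_add_norm_sub x c y
      _ ≤ ‖x - c‖ + r := by rw [norm_sub_rev c y]; gcongr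
  have hsq : ‖x - y‖ ^ 2 ≤ 2 * ‖x - c‖ ^ 2 + 2 * r ^ 2 := by
    nlinarith [norm_nonneg (x - y), sq_nonneg (‖x - c‖ - r)]
  rw [← exp_add, exp_le_exp]
  nlinarith

theorem MeasureTheory.sum_setIntegral_le_integral {X ι : Type*} [MeasurableSpace X]
    {ν : Measure X} [Fintype ι] {s : ι → Set X} (hs : ∀ i, MeasurableSet (s i))
    (hd : Pairwise (Function.onFun Disjoint s)) {f : X → ℝ} (hf : Integrable f ν)
    (hf0 : 0 ≤ᵐ[ν] f) :
    ∑ i, ∫ x in s i, f x ∂ν ≤ ∫ x, f x ∂ν := by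
  rw [← integral_iUnion_fintype hs hd fun i ↦ hf.integrableOn]
  exact setIntegral_le_integral hf hf0

section Gaussian

variable {V : Type*} [NormedAddCommGroup V] [InnerProductSpace ℝ V] [FiniteDimensional ℝ V]
  [MeasurableSpace V] [BorelSpace V]

theorem integrable_exp_neg_mul_sq_norm_sub {b : ℝ} (hb : 0 < b) (x : V) :
    Integrable fun y : V ↦ exp (-b * ‖x - y‖ ^ 2) := by
  have hint : Integrable fun z : V ↦ exp (-b * ‖z‖ ^ 2) :=
    Integrable.of_integral_ne_zero (by rw [integral_rexp_neg_mul_sq_norm hb]; positivity)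
  exact hint.comp_sub_left x

theorem sum_exp_neg_mul_sq_norm_sub_le {ι : Type*} [Fintype ι] (μ : ι → V) {r b : ℝ}
    (hr : 0 < r) (hb : 0 < b) (hsep : Pairwise fun i j ↦ 2 * r ≤ ‖μ i - μ j‖) (x : V) :
    ∑ k, exp (-b * ‖x - μ k‖ ^ 2) ≤
      exp (b * r ^ 2) * (2 * π / b) ^ (Module.finrank ℝ V / 2 : ℝ) /
        volume.real (ball (0 : V) r) := by
  set g : V → ℝ := fun y ↦ exp (-(b / 2) * ‖x - y‖ ^ 2)
  have hg : Integrable g := integrable_exp_neg_mul_sq_norm_sub (half_pos hb) x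
  have hball : ∀ k, exp (-b * ‖x - μ k‖ ^ 2) * volume.real (ball (0 : V) r) ≤
      exp (b * r ^ 2) * ∫ y in ball (μ k) r, g y := by
    intro k
    rw [← Measure.addHaar_real_ball_center volume (μ k), ← integral_const_mul]
    refine setIntegral_ge_of_const_le_real measurableSet_ball measure_ball_lt_top.ne
      (fun y hy ↦ ?_) (hg.const_mul _).integrableOn
    exact exp_neg_mul_sq_norm_sub_le_of_norm_sub_le hb.le (mem_ball_iff_norm.mp hy).le
  have hdisj : Pairwise (Function.onFun Disjoint fun k ↦ ball (μ k) r) := fun i j hij ↦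
    ball_disjoint_ball (by rw [dist_eq_norm]; linarith [hsep hij])
  have hpos : 0 < volume.real (ball (0 : V) r) :=
    ENNReal.toReal_pos (measure_ball_pos volume 0 hr).ne' measure_ball_lt_top.ne
  rw [le_div_iff₀ hpos, sum_mul, show 2 * π / b = π / (b / 2) by field_simp,
    ← integral_rexp_neg_mul_sq_norm (half_pos hb),
    ← integral_sub_left_eq_self _ volume x]
  calc ∑ k, exp (-b * ‖x - μ k‖ ^ 2) * volume.real (ball (0 : V) r)
      ≤ ∑ k, exp (b * r ^ 2) * ∫ y in ball (μ k) r, g y := sum_le_sum fun k _ ↦ hball k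
    _ ≤ exp (b * r ^ 2) * ∫ y, g y := by
      rw [← mul_sum]
      gcongr
      exact sum_setIntegral_le_integral (fun _ ↦ measurableSet_ball) hdisj hg
        (Filter.Eventually.of_forall fun y ↦ (exp_pos _).le)

theorem sum_exp_neg_sq_norm_sub_div_mul_rpow_le {ι : Type*} [Fintype ι] (μ : ι → V)
    {c m r : ℝ} (hc : 0 < c) (hm : 0 ≤ m) (hr : 0 < r)
    (hsep : Pairwise fun i j ↦ 2 * r ≤ ‖μ i - μ j‖) (x : V) :
    ∑ k, exp (-‖x - μ k‖ ^ 2 / (2 * c)) * ‖x - μ k‖ ^ m ≤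
      (4 * c) ^ (m / 2) * (⌈m / 2⌉₊)! * (exp (r ^ 2 / (4 * c)) *
        (8 * π * c) ^ (Module.finrank ℝ V / 2 : ℝ) / volume.real (ball (0 : V) r)) := by
  have hgauss := sum_exp_neg_mul_sq_norm_sub_le μ hr (inv_pos.mpr (by positivity : 0 < 4 * c))
    hsep x
  rw [show 2 * π / (4 * c)⁻¹ = 8 * π * c by field_simp; ring, ← div_eq_inv_mul] at hgauss
  calc ∑ k, exp (-‖x - μ k‖ ^ 2 / (2 * c)) * ‖x - μ k‖ ^ m
      ≤ ∑ k, (4 * c) ^ (m / 2) * (⌈m / 2⌉₊)! * exp (-(4 * c)⁻¹ * ‖x - μ k‖ ^ 2) :=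
        sum_le_sum fun k _ ↦
          (exp_neg_sq_div_mul_rpow_le hc hm (norm_nonneg _)).trans_eq (by ring_nf)
    _ ≤ _ := by
      rw [← mul_sum]
      gcongr

end Gaussian

theorem exp_neg_sq_div_mul_rpow_eq {c m h t : ℝ} (hh : 0 < h) (ht : 0 ≤ t) :
    exp (-t ^ 2 / (2 * c * h ^ 2)) * t ^ m =
      h ^ m * (exp (-(t / h) ^ 2 / (2 * c)) * (t / h) ^ m) := by
  rw [show -(t / h) ^ 2 / (2 * c) = -t ^ 2 / (2 * c * h ^ 2) by ring, div_rpow ht hh.le]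
  field_simp

/-- **Gaussian moment sum bound for separated points.** If the points
`μ₁,…,μ_K ∈ ℝ^d` are `2q`-separated with `q ≥ h/ρ`, then for any `m ≥ 0`,
`∑ₖ exp(−‖x−μₖ‖²/(2C_Σh²)) ‖x−μₖ‖ᵐ ≤ C hᵐ` uniformly in `x`, with `C` depending only on
`d, m, ρ, C_Σ`. -/
theorem separated_gaussian_moment_sum
    (d : ℕ) (m ρ CSig : ℝ) (hm : 0 ≤ m) (hρ : 1 ≤ ρ) (hCSig : 0 < CSig) :
    ∃ C : ℝ, ∀ (K : ℕ) (μ : Fin K → EuclideanSpace ℝ (Fin d)) (h q : ℝ),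
      0 < h → h / ρ ≤ q →
      (∀ i j, i ≠ j → 2 * q ≤ ‖μ i - μ j‖) →
      ∀ x : EuclideanSpace ℝ (Fin d),
        ∑ k, Real.exp (-‖x - μ k‖ ^ 2 / (2 * CSig * h ^ 2)) * ‖x - μ k‖ ^ m
          ≤ C * h ^ m := by
  have hρ0 : 0 < ρ := one_pos.trans_le hρ
  refine ⟨(4 * CSig) ^ (m / 2) * (⌈m / 2⌉₊)! * (exp (ρ⁻¹ ^ 2 / (4 * CSig)) *
    (8 * π * CSig) ^ (d / 2 : ℝ) / volume.real (ball (0 : EuclideanSpace ℝ (Fin d)) ρ⁻¹)),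
    fun K μ h q hh hq hsep x ↦ ?_⟩
  have hnorm (y z : EuclideanSpace ℝ (Fin d)) :
      ‖h⁻¹ • y - h⁻¹ • z‖ = ‖y - z‖ / h := by
    rw [← smul_sub, norm_smul, norm_inv, Real.norm_of_nonneg hh.le, inv_mul_eq_div]
  have hsep' : Pairwise fun i j ↦ 2 * ρ⁻¹ ≤ ‖h⁻¹ • μ i - h⁻¹ • μ j‖ := by
    intro i j hij
    rw [hnorm, le_div_iff₀ hh]
    have : h * ρ⁻¹ ≤ q := by rwa [← div_eq_mul_inv]
    linarith [hsep i j hij]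
  calc ∑ k, exp (-‖x - μ k‖ ^ 2 / (2 * CSig * h ^ 2)) * ‖x - μ k‖ ^ m
      = h ^ m * ∑ k, exp (-‖h⁻¹ • x - h⁻¹ • μ k‖ ^ 2 / (2 * CSig)) *
          ‖h⁻¹ • x - h⁻¹ • μ k‖ ^ m := by
        simp only [mul_sum, hnorm, exp_neg_sq_div_mul_rpow_eq hh (norm_nonneg _)]
    _ ≤ h ^ m * _ := by
        have hbound :=
          sum_exp_neg_sq_norm_sub_div_mul_rpow_le _ hCSig hm (inv_pos.mpr hρ0) hsep' (h⁻¹ • x)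
        rw [finrank_euclideanSpace_fin] at hbound
        gcongr
    _ = _ := mul_comm _ _
end
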